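/- arXiv:1110.3531 — 3 statements merged into one kernel-verified Lean document; each statement's English description precedes it below -/
import Mathlib

section
/- Let A_1, …, A_m be real n×n matrices, let α_1, …, α_m be nonnegative real numbers with Σ_i α_i = 1, let Q be a real symmetric positive definite n×n matrix, and let P be a real symmetric matrix satisfying the Lyapunov equation (Σ_i α_i A_i)ᵀ P + P (Σ_i α_i A_i) = -Q. Then for every nonzero x ∈ ℝⁿ there exists an index i ∈ {1, …, m} such that xᵀ(A_iᵀ P + P A_i) x < 0. -/
/-!
The Lyapunov derivative `A ↦ Aᵀ P + P A` and the quadratic form `M ↦ xᵀ M x` are both linear,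
so `xᵀ ((∑ αᵢ Aᵢ)ᵀ P + P (∑ αᵢ Aᵢ)) x = ∑ αᵢ xᵀ (Aᵢᵀ P + P Aᵢ) x`. The left side is `-xᵀ Q x < 0`,
and a sum with nonnegative weights can only be negative if one of its terms is.
-/

open Matrix

theorem Finset.exists_neg_of_sum_mul_neg {ι R : Type*} [Semiring R] [LinearOrder R]
    [IsOrderedRing R] (s : Finset ι) {w f : ι → R} (hw : ∀ i ∈ s, 0 ≤ w i)
    (h : ∑ i ∈ s, w i * f i < 0) : ∃ i ∈ s, f i < 0 := by
  obtain ⟨i, hi, hneg⟩ := Finset.exists_lt_of_sum_lt (g := fun _ ↦ (0 : R)) (by simpa using h)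
  exact ⟨i, hi, neg_of_mul_neg_right hneg (hw i hi)⟩

namespace Matrix

variable {ι n R : Type*} [Fintype n] [CommSemiring R]

theorem dotProduct_sum_smul_mulVec (s : Finset ι) (c : ι → R) (M : ι → Matrix n n R)
    (x y : n → R) : x ⬝ᵥ (∑ i ∈ s, c i • M i) *ᵥ y = ∑ i ∈ s, c i * (x ⬝ᵥ M i *ᵥ y) := by
  simp only [sum_mulVec, dotProduct_sum, smul_mulVec, dotProduct_smul, smul_eq_mul]

def lyapunovOperator (P : Matrix n n R) : Matrix n n R →ₗ[R] Matrix n n R where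
  toFun A := Aᵀ * P + P * A
  map_add' A B := by simp only [transpose_add, add_mul, mul_add]; abel
  map_smul' c A := by
    simp only [transpose_smul, smul_mul, Matrix.mul_smul, smul_add, RingHom.id_apply]

@[simp]
theorem lyapunovOperator_apply (P A : Matrix n n R) : lyapunovOperator P A = Aᵀ * P + P * A :=
  rfl

end Matrix

theorem lyapunov_convex_combination_pointwise_decrease_general
    {n m : ℕ} (A : Fin m → Matrix (Fin n) (Fin n) ℝ)
    (α : Fin m → ℝ) (hα : ∀ i, 0 ≤ α i)
    (Q : Matrix (Fin n) (Fin n) ℝ) (hQ : Q.PosDef)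
    (P : Matrix (Fin n) (Fin n) ℝ)
    (hLyap : (∑ i, α i • A i)ᵀ * P + P * (∑ i, α i • A i) = -Q) :
    ∀ x : Fin n → ℝ, x ≠ 0 →
      ∃ i : Fin m, x ⬝ᵥ ((A i)ᵀ * P + P * A i).mulVec x < 0 := by
  intro x hx
  have hsplit : (∑ i, α i • A i)ᵀ * P + P * (∑ i, α i • A i)
      = ∑ i, α i • ((A i)ᵀ * P + P * A i) := by
    simpa only [map_smul, lyapunovOperator_apply]
      using map_sum (lyapunovOperator P) (fun i ↦ α i • A i) Finset.univ
  have hneg : x ⬝ᵥ (∑ i, α i • ((A i)ᵀ * P + P * A i)) *ᵥ x < 0 := by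
    rw [← hsplit, hLyap, neg_mulVec, dotProduct_neg, neg_lt_zero]
    simpa using hQ.dotProduct_mulVec_pos hx
  rw [dotProduct_sum_smul_mulVec] at hneg
  simpa using Finset.exists_neg_of_sum_mul_neg Finset.univ (fun i _ ↦ hα i) hneg

/-- If P solves the Lyapunov equation for a convex combination
`∑ i, α i • A i` with symmetric positive definite Q, then for every nonzero x
there is an index i with xᵀ(A_iᵀ P + P A_i) x < 0. -/
theorem lyapunov_convex_combination_pointwise_decrease
    {n m : ℕ} (A : Fin m → Matrix (Fin n) (Fin n) ℝ)
    (α : Fin m → ℝ) (hα : ∀ i, 0 ≤ α i) (hsum : ∑ i, α i = 1)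
    (Q : Matrix (Fin n) (Fin n) ℝ) (hQsymm : Q.IsSymm) (hQ : Q.PosDef)
    (P : Matrix (Fin n) (Fin n) ℝ) (hPsymm : P.IsSymm)
    (hLyap : (∑ i, α i • A i)ᵀ * P + P * (∑ i, α i • A i) = -Q) :
    ∀ x : Fin n → ℝ, x ≠ 0 →
      ∃ i : Fin m, x ⬝ᵥ ((A i)ᵀ * P + P * A i).mulVec x < 0 :=
  lyapunov_convex_combination_pointwise_decrease_general A α hα Q hQ P hLyap
end

section
/- Let Ā be a real n×n Hurwitz matrix and let Q be a real symmetric positive definite n×n matrix. Then there exists a real symmetric positive definite n×n matrix P satisfying the Lyapunov equation Āᵀ P + P Ā = -Q. -/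
/-!
The Lyapunov operator `P ↦ Aᵀ P + P A` of a Hurwitz matrix `A` is invertible: over `ℂ`, a
solution of `Aᵀ X = X (-A)` vanishes because `Aᵀ` and `-A` have disjoint spectra (Sylvester).
Hence `Aᵀ P + P A = -Q` has a unique solution, which is symmetric since its transpose solves the
same equation.

For positivity, deform `A` through the Hurwitz matrices `t • A - (1 - t) • 1`, `t ∈ [0, 1]`,
starting at `-1`, where the solution is `Q / 2`. The solutions depend continuously on `t` and are
never singular, as `P v = 0` would give `vᵀ Q v = -vᵀ (Aᵀ P + P A) v = 0`. A continuous path of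
symmetric nonsingular matrices cannot leave the open set of positive definite matrices, because
the matrices with a negative direction form a second open set covering the rest.
-/

open Matrix Polynomial

def IsHurwitz {n : ℕ} (M : Matrix (Fin n) (Fin n) ℝ) : Prop :=
  ∀ μ ∈ spectrum ℂ (M.map (algebraMap ℝ ℂ)), μ.re < 0

theorem SemiconjBy.aeval {R A : Type*} [CommSemiring R] [Semiring A] [Algebra R A]
    {x a b : A} (h : SemiconjBy x a b) (p : R[X]) :
    SemiconjBy x (aeval a p) (aeval b p) := by
  simp only [SemiconjBy, aeval_eq_sum_range, Finset.mul_sum, Finset.sum_mul,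
    mul_smul_comm, smul_mul_assoc, (h.pow_right _).eq]

theorem map_ringInverse {M₀ N₀ F : Type*} [MonoidWithZero M₀] [MonoidWithZero N₀]
    [EquivLike F M₀ N₀] [MulEquivClass F M₀ N₀] (e : F) (x : M₀) :
    e (Ring.inverse x) = Ring.inverse (e x) := by
  by_cases hx : IsUnit x
  · obtain ⟨u, rfl⟩ := hx
    have he : e u = (Units.map (e : M₀ →* N₀) u : N₀) := rfl
    rw [he, Ring.inverse_unit, Ring.inverse_unit, Units.coe_map_inv]
    rfl
  · rw [Ring.inverse_non_unit _ hx, Ring.inverse_non_unit _ (by simpa using hx), map_zero]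

theorem spectrum.algebraMap_subset_singleton {R A : Type*} [Field R] [Ring A] [Algebra R A]
    (k : R) : spectrum R (algebraMap R A k) ⊆ {k} := by
  intro μ hμ
  by_contra hne
  rw [spectrum.mem_iff, ← map_sub] at hμ
  exact hμ ((isUnit_iff_ne_zero.2 (sub_ne_zero.2 hne)).map _)

theorem Matrix.spectrum_transpose {R n : Type*} [CommRing R] [Fintype n] [DecidableEq n]
    (A : Matrix n n R) : spectrum R Aᵀ = spectrum R A := by
  ext μ
  rw [spectrum.mem_iff, spectrum.mem_iff, ← isUnit_transpose, transpose_sub,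
    transpose_transpose]
  simp [Algebra.algebraMap_eq_smul_one]

theorem Matrix.eq_zero_of_mul_eq_mul_of_disjoint_spectrum {K n : Type*} [Field K]
    [IsAlgClosed K] [Fintype n] [DecidableEq n] {A B X : Matrix n n K}
    (hAB : Disjoint (spectrum K A) (spectrum K B)) (h : A * X = X * B) : X = 0 := by
  cases isEmpty_or_nonempty n
  · exact Subsingleton.elim _ _
  -- `χ_B(A)` is invertible, its spectrum `χ_B(σ A)` avoiding `0`, and `χ_B(A) X = X χ_B(B) = 0`.
  have hunit : IsUnit (aeval A B.charpoly) := by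
    refine (spectrum.zero_notMem_iff K).1 ?_
    rw [spectrum.map_polynomial_aeval_of_nonempty _ _
      (spectrum.nonempty_of_isAlgClosed_of_finiteDimensional K A)]
    rintro ⟨μ, hμA, hμ⟩
    exact hAB.ne_of_mem hμA (mem_spectrum_iff_isRoot_charpoly.2 hμ) rfl
  refine hunit.mul_left_cancel ?_
  rw [← (SemiconjBy.aeval h.symm B.charpoly).eq, aeval_self_charpoly, mul_zero, mul_zero]

theorem IsHurwitz.smul_sub_smul_one {n : ℕ} {A : Matrix (Fin n) (Fin n) ℝ} (hA : IsHurwitz A)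
    {t s : ℝ} (ht : 0 ≤ t) (hs : 0 ≤ s) (hts : 0 < t + s) : IsHurwitz (t • A - s • 1) := by
  intro μ hμ
  have hmap : (t • A - s • 1).map (algebraMap ℝ ℂ)
      = (t : ℂ) • A.map (algebraMap ℝ ℂ) - algebraMap ℂ _ (s : ℂ) := by
    ext i j
    by_cases hij : i = j <;> simp [hij, algebraMap_matrix_apply]
  rw [hmap, ← spectrum.sub_singleton_eq] at hμ
  obtain ⟨ν, hν, _, rfl, rfl⟩ := hμ
  rcases ht.eq_or_lt with rfl | ht
  · rw [Complex.ofReal_zero, zero_smul, ← map_zero (algebraMap ℂ _)] at hν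
    rw [spectrum.algebraMap_subset_singleton _ hν]
    simp only [Complex.sub_re, Complex.zero_re, Complex.ofReal_re]
    linarith
  · have hσ := spectrum.unit_smul_eq_smul (R := ℂ) (A.map (algebraMap ℝ ℂ))
      (Units.mk0 (t : ℂ) (by exact_mod_cast ht.ne'))
    simp only [Units.smul_def, Units.val_mk0] at hσ
    rw [hσ] at hν
    obtain ⟨κ, hκ, rfl⟩ := hν
    have := hA κ hκ
    simp only [Complex.sub_re, smul_eq_mul, Complex.re_ofReal_mul, Complex.ofReal_re]
    nlinarith

section LyapunovMap

variable {R n : Type*} [CommRing R] [Fintype n] [DecidableEq n]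

def lyapunovMap : Matrix n n R →ₗ[R] Matrix n n R →ₗ[R] Matrix n n R :=
  LinearMap.mul R _ ∘ₗ (transposeLinearEquiv n n R R).toLinearMap + (LinearMap.mul R _).flip

@[simp]
theorem lyapunovMap_apply (A P : Matrix n n R) : lyapunovMap A P = Aᵀ * P + P * A := rfl

theorem lyapunovMap_transpose (A P : Matrix n n R) :
    lyapunovMap A Pᵀ = (lyapunovMap A P)ᵀ := by
  simp only [lyapunovMap_apply, transpose_add, transpose_mul, transpose_transpose, add_comm]

end LyapunovMap

theorem IsHurwitz.lyapunovMap_injective {n : ℕ} {A : Matrix (Fin n) (Fin n) ℝ}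
    (hA : IsHurwitz A) : Function.Injective (lyapunovMap A) := by
  rw [← LinearMap.ker_eq_bot, LinearMap.ker_eq_bot']
  intro P hP
  let φ := (algebraMap ℝ ℂ).mapMatrix (m := Fin n)
  have hφ : φ Aᵀ * φ P = φ P * -φ A := by
    rw [← map_mul, mul_neg, ← map_mul, eq_neg_iff_add_eq_zero, ← map_add, ← lyapunovMap_apply,
      hP, map_zero]
  have hdisj : Disjoint (spectrum ℂ (φ Aᵀ)) (spectrum ℂ (-φ A)) := by
    rw [RingHom.mapMatrix_apply, transpose_map, spectrum_transpose, ← spectrum.neg_eq,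
      Set.disjoint_left]
    intro μ hμ hμ'
    have h₁ := hA μ hμ
    have h₂ := hA (-μ) hμ'
    rw [Complex.neg_re] at h₂
    linarith
  exact map_injective Complex.ofReal_injective
    (eq_zero_of_mul_eq_mul_of_disjoint_spectrum hdisj hφ)

theorem IsHurwitz.isUnit_lyapunovMap {n : ℕ} {A : Matrix (Fin n) (Fin n) ℝ}
    (hA : IsHurwitz A) : IsUnit (lyapunovMap A) :=
  (LinearMap.isUnit_iff_ker_eq_bot _).2 (LinearMap.ker_eq_bot.2 hA.lyapunovMap_injective)

section LyapunovSolution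

variable {n : Type*} [Fintype n] [DecidableEq n]

-- This is `0` when `lyapunovMap A` is not invertible.
noncomputable def lyapunovSolution (A Q : Matrix n n ℝ) : Matrix n n ℝ :=
  Ring.inverse (lyapunovMap A) (-Q)

theorem lyapunovMap_lyapunovSolution {A : Matrix n n ℝ} (hA : IsUnit (lyapunovMap A))
    (Q : Matrix n n ℝ) : lyapunovMap A (lyapunovSolution A Q) = -Q :=
  congr($(Ring.mul_inverse_cancel _ hA) (-Q))

theorem lyapunovSolution_eq {A P Q : Matrix n n ℝ} (hA : IsUnit (lyapunovMap A))
    (hP : lyapunovMap A P = -Q) : lyapunovSolution A Q = P :=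
  ((Module.End.isUnit_iff _).1 hA).1 <| by rw [lyapunovMap_lyapunovSolution hA, hP]

theorem lyapunovSolution_isSymm {A Q : Matrix n n ℝ} (hA : IsUnit (lyapunovMap A))
    (hQ : Q.IsSymm) : (lyapunovSolution A Q).IsSymm :=
  (lyapunovSolution_eq hA <| by
    rw [lyapunovMap_transpose, lyapunovMap_lyapunovSolution hA, transpose_neg, hQ.eq]).symm

theorem posDef_lyapunovSolution_neg_one {Q : Matrix n n ℝ} (hQ : Q.PosDef) :
    (lyapunovSolution (-1) Q).PosDef := by
  have hunit : IsUnit (lyapunovMap (-1 : Matrix n n ℝ)) := by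
    refine (LinearMap.isUnit_iff_ker_eq_bot _).2 (LinearMap.ker_eq_bot.2 fun P P' h => ?_)
    simp only [lyapunovMap_apply, transpose_neg, transpose_one, neg_mul, one_mul, mul_neg,
      mul_one, ← two_smul ℝ] at h
    exact neg_inj.1 (smul_right_injective _ (two_ne_zero' ℝ) h)
  rw [lyapunovSolution_eq hunit (P := (2⁻¹ : ℝ) • Q) (by
    simp only [lyapunovMap_apply, transpose_neg, transpose_one, neg_mul, one_mul, mul_neg, mul_one]
    module)]
  exact hQ.smul (by norm_num)

theorem continuousOn_lyapunovSolution (Q : Matrix n n ℝ) :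
    ContinuousOn (fun A => lyapunovSolution A Q) {A | IsUnit (lyapunovMap A)} := by
  -- Continuity of inversion is available for matrices, so pass to the matrix `K A` of
  -- `lyapunovMap A` in the standard basis.
  let b := Matrix.stdBasis ℝ n n
  let K : Matrix n n ℝ →ₗ[ℝ] Matrix (n × n) (n × n) ℝ :=
    (LinearMap.toMatrixAlgEquiv b).toLinearMap ∘ₗ lyapunovMap
  have hsol : ∀ A, lyapunovSolution A Q = b.equivFun.symm ((K A)⁻¹ *ᵥ b.equivFun (-Q)) := by
    intro A
    rw [nonsing_inv_eq_ringInverse, LinearEquiv.eq_symm_apply]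
    simp only [K, LinearMap.comp_apply, AlgEquiv.toLinearMap_apply, ← map_ringInverse]
    exact (LinearMap.toMatrix_mulVec_repr b b _ _).symm
  have hK : Continuous K := K.continuous_of_finiteDimensional
  have hb : Continuous b.equivFun.symm :=
    b.equivFun.symm.toLinearMap.continuous_of_finiteDimensional
  have hmul : Continuous fun M : Matrix (n × n) (n × n) ℝ => M *ᵥ b.equivFun (-Q) :=
    continuous_id.matrix_mulVec continuous_const
  intro A hA
  have hdet : (K A).det ≠ 0 := by
    rw [← isUnit_iff_ne_zero, ← isUnit_iff_isUnit_det]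
    exact hA.map (LinearMap.toMatrixAlgEquiv b)
  have hinv : ContinuousAt Inv.inv (K A) :=
    continuousAt_matrix_inv _ (by rw [Ring.inverse_eq_inv']; exact continuousAt_inv₀ hdet)
  simp only [hsol]
  exact (hb.continuousAt.comp
    (hmul.continuousAt.comp (hinv.comp hK.continuousAt))).continuousWithinAt

theorem eq_zero_of_mulVec_eq_zero_of_lyapunovMap_eq_neg {A P Q : Matrix n n ℝ} (hP : P.IsSymm)
    (hQ : Q.PosDef) (hPQ : lyapunovMap A P = -Q) {v : n → ℝ} (hv : P *ᵥ v = 0) : v = 0 := by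
  by_contra hv0
  have hvP : v ᵥ* P = 0 := by rw [← mulVec_transpose, hP.eq, hv]
  have hquad : v ⬝ᵥ lyapunovMap A P *ᵥ v = 0 := by
    rw [lyapunovMap_apply, add_mulVec, dotProduct_add, ← mulVec_mulVec, ← mulVec_mulVec, hv,
      mulVec_zero, dotProduct_zero, zero_add, dotProduct_mulVec, hvP, zero_dotProduct]
  have hpos := hQ.dotProduct_mulVec_pos hv0
  rw [star_trivial, ← neg_neg Q, ← hPQ, neg_mulVec, dotProduct_neg, hquad, neg_zero] at hpos
  exact lt_irrefl _ hpos

end LyapunovSolution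

section PosDef

variable {n : Type*} [Fintype n]

theorem Matrix.posDef_iff_isSymm_and_dotProduct_mulVec_pos {M : Matrix n n ℝ} :
    M.PosDef ↔ M.IsSymm ∧ ∀ x ≠ 0, 0 < x ⬝ᵥ M *ᵥ x := by
  simp [posDef_iff_dotProduct_mulVec]

theorem isOpen_setOf_forall_dotProduct_mulVec_pos :
    IsOpen {M : Matrix n n ℝ | ∀ x ≠ 0, 0 < x ⬝ᵥ M *ᵥ x} := by
  have hsphere : {M : Matrix n n ℝ | ∀ x ≠ 0, 0 < x ⬝ᵥ M *ᵥ x}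
      = {M | ∀ x ∈ Metric.sphere (0 : n → ℝ) 1, 0 < x ⬝ᵥ M *ᵥ x} := by
    ext M
    refine ⟨fun h x hx => h x (ne_zero_of_mem_unit_sphere ⟨x, hx⟩), fun h x hx => ?_⟩
    have := h (‖x‖⁻¹ • x) (by simp [norm_smul, hx])
    rw [smul_dotProduct, mulVec_smul, dotProduct_smul, smul_eq_mul, smul_eq_mul] at this
    have hx' : 0 < ‖x‖⁻¹ := by positivity
    exact (pos_iff_pos_of_mul_pos ((pos_iff_pos_of_mul_pos this).1 hx')).1 hx'
  rw [hsphere, isOpen_iff_eventually]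
  intro M hM
  refine (isCompact_sphere 0 1).eventually_forall_of_forall_eventually fun x hx => ?_
  have hquad : Continuous fun p : Matrix n n ℝ × (n → ℝ) => p.2 ⬝ᵥ p.1 *ᵥ p.2 :=
    continuous_snd.dotProduct (continuous_fst.matrix_mulVec continuous_snd)
  exact hquad.continuousAt.eventually (lt_mem_nhds (hM x hx))

theorem isOpen_setOf_exists_dotProduct_mulVec_neg :
    IsOpen {M : Matrix n n ℝ | ∃ x, x ⬝ᵥ M *ᵥ x < 0} := by
  simp only [Set.ofPred_exists]
  exact isOpen_iUnion fun x => isOpen_lt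
    (continuous_const.dotProduct (continuous_id.matrix_mulVec continuous_const)) continuous_const

theorem Matrix.IsSymm.forall_dotProduct_mulVec_pos_or_exists_neg {M : Matrix n n ℝ}
    (hM : M.IsSymm) (hker : ∀ v, M *ᵥ v = 0 → v = 0) :
    (∀ x ≠ 0, 0 < x ⬝ᵥ M *ᵥ x) ∨ ∃ x, x ⬝ᵥ M *ᵥ x < 0 := by
  refine or_iff_not_imp_right.2 fun hneg x hx => ?_
  simp only [not_exists, not_lt] at hneg
  have hpsd : M.PosSemidef :=
    .of_dotProduct_mulVec_nonneg (isHermitian_iff_isSymm.2 hM) (by simpa using hneg)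
  refine (hneg x).lt_of_ne fun h => hx (hker x ?_)
  exact (hpsd.dotProduct_mulVec_zero_iff x).1 (by simpa using h.symm)

theorem IsPreconnected.posDef_of_continuousOn {X : Type*} [TopologicalSpace X] {S : Set X}
    (hS : IsPreconnected S) {P : X → Matrix n n ℝ} (hP : ContinuousOn P S)
    (hsymm : ∀ x ∈ S, (P x).IsSymm) (hker : ∀ x ∈ S, ∀ v, P x *ᵥ v = 0 → v = 0)
    {x₀ : X} (hx₀ : x₀ ∈ S) (h₀ : (P x₀).PosDef) {x : X} (hx : x ∈ S) : (P x).PosDef := by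
  have hdisj : Disjoint {M : Matrix n n ℝ | ∀ x ≠ 0, 0 < x ⬝ᵥ M *ᵥ x}
      {M | ∃ x, x ⬝ᵥ M *ᵥ x < 0} := by
    refine Set.disjoint_left.2 fun M hpos ⟨y, hy⟩ => ?_
    have hy0 : y ≠ 0 := by rintro rfl; simp at hy
    exact (hpos y hy0).not_gt hy
  have hsub := (hS.image P hP).subset_left_of_subset_union
    isOpen_setOf_forall_dotProduct_mulVec_pos isOpen_setOf_exists_dotProduct_mulVec_neg hdisj
    (Set.image_subset_iff.2 fun x hx =>
      (hsymm x hx).forall_dotProduct_mulVec_pos_or_exists_neg (hker x hx))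
    ⟨P x₀, Set.mem_image_of_mem P hx₀, (posDef_iff_isSymm_and_dotProduct_mulVec_pos.1 h₀).2⟩
  exact posDef_iff_isSymm_and_dotProduct_mulVec_pos.2
    ⟨hsymm x hx, hsub (Set.mem_image_of_mem P hx)⟩

end PosDef

/-- for a Hurwitz matrix Ā and symmetric positive definite Q,
the Lyapunov equation Āᵀ P + P Ā = -Q has a symmetric positive definite
solution P. -/
theorem exists_lyapunov_solution_of_hurwitz
    {n : ℕ} (Abar : Matrix (Fin n) (Fin n) ℝ) (hA : IsHurwitz Abar)
    (Q : Matrix (Fin n) (Fin n) ℝ) (hQsymm : Q.IsSymm) (hQ : Q.PosDef) :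
    ∃ P : Matrix (Fin n) (Fin n) ℝ, P.IsSymm ∧ P.PosDef ∧
      Abarᵀ * P + P * Abar = -Q := by
  let A : ℝ → Matrix (Fin n) (Fin n) ℝ := fun t => t • Abar - (1 - t) • 1
  have hunit : ∀ t ∈ Set.Icc (0 : ℝ) 1, IsUnit (lyapunovMap (A t)) := fun t ht =>
    (hA.smul_sub_smul_one ht.1 (sub_nonneg.2 ht.2) (by linarith)).isUnit_lyapunovMap
  have hsymm : ∀ t ∈ Set.Icc (0 : ℝ) 1, (lyapunovSolution (A t) Q).IsSymm := fun t ht =>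
    lyapunovSolution_isSymm (hunit t ht) hQsymm
  have hPD : (lyapunovSolution (A 1) Q).PosDef :=
    isPreconnected_Icc.posDef_of_continuousOn
      ((continuousOn_lyapunovSolution Q).comp (by fun_prop) hunit) hsymm
      (fun t ht _ => eq_zero_of_mulVec_eq_zero_of_lyapunovMap_eq_neg (hsymm t ht) hQ
        (lyapunovMap_lyapunovSolution (hunit t ht) Q))
      (Set.left_mem_Icc.2 zero_le_one) (by simpa [A] using posDef_lyapunovSolution_neg_one hQ)
      (Set.right_mem_Icc.2 zero_le_one)
  have hA₁ : A 1 = Abar := by simp [A]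
  rw [hA₁] at hPD
  exact ⟨lyapunovSolution Abar Q, lyapunovSolution_isSymm hA.isUnit_lyapunovMap hQsymm, hPD,
    lyapunovMap_lyapunovSolution hA.isUnit_lyapunovMap Q⟩
end

section
/- Let A be a real n×n matrix and B a real n×m matrix, and suppose the pair (A, B) is stabilizable, i.e., there exists a real m×n matrix K such that A - BK is Hurwitz. Let G_1, …, G_p be real n×n diagonal matrices and α_1, …, α_p positive real numbers with Σ_i α_i = 1, such that the diagonal matrix Σ := Σ_i α_i G_i has all diagonal entries strictly positive (hence is invertible). Then there exists a real m×n matrix K̃ such that the convex combination Σ_i α_i (A - B K̃ G_i) is Hurwitz. -/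
open Matrix

/-- if (A, B) is stabilizable and the G_i are diagonal with
positive weights α_i summing to 1 such that Σ = ∑ i, α i • G i has strictly
positive diagonal entries, then some gain K̃ makes the convex combination
∑ i, α i • (A - B K̃ G_i) Hurwitz. -/
theorem exists_gain_convex_combination_hurwitz
    {n m p : ℕ} (A : Matrix (Fin n) (Fin n) ℝ) (B : Matrix (Fin n) (Fin m) ℝ)
    (hstab : ∃ K : Matrix (Fin m) (Fin n) ℝ, IsHurwitz (A - B * K))
    (G : Fin p → Matrix (Fin n) (Fin n) ℝ) (hGdiag : ∀ i, (G i).IsDiag)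
    (α : Fin p → ℝ) (hα : ∀ i, 0 < α i) (hsum : ∑ i, α i = 1)
    (hSigmaPos : ∀ j, 0 < (∑ i, α i • G i) j j) :
    ∃ Ktilde : Matrix (Fin m) (Fin n) ℝ,
      IsHurwitz (∑ i, α i • (A - B * Ktilde * G i)) := by
  obtain ⟨K, hK⟩ := hstab
  set S : Matrix (Fin n) (Fin n) ℝ := ∑ i, α i • G i with hS
  have hSdiag : S.IsDiag := by
    intro a b hab
    simp only [hS, Matrix.sum_apply, Matrix.smul_apply]
    refine Finset.sum_eq_zero fun i _ => ?_
    rw [hGdiag i hab, smul_zero]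
  have hSeq : S = diagonal S.diag := hSdiag.diagonal_diag.symm
  have hdet : IsUnit S.det := by
    rw [hSeq, det_diagonal]
    exact (Finset.prod_pos (fun j _ => hSigmaPos j)).ne'.isUnit
  refine ⟨K * S⁻¹, ?_⟩
  have key : (∑ i, α i • (A - B * (K * S⁻¹) * G i)) = A - B * K := by
    have : (∑ i, α i • (A - B * (K * S⁻¹) * G i))
        = (∑ i, α i) • A - B * (K * S⁻¹) * S := by
      rw [Finset.sum_smul, hS, Finset.mul_sum, ← Finset.sum_sub_distrib]
      congr 1; ext i
      rw [smul_sub, mul_smul_comm]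
    rw [this, hsum, one_smul, Matrix.mul_assoc, Matrix.mul_assoc, nonsing_inv_mul _ hdet, Matrix.mul_one]
  rw [key]
  exact hK
end
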